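/- arXiv:2006.05228 — 3 statements merged into one kernel-verified Lean document; each statement's English description precedes it below -/
import Mathlib

section
/- Let (X,Y) be random variables on a Polish space E, let k ≥ 1, and let X₁,…,X_k be i.i.d. samples from the conditional distribution of X given Y. Then for any continuous bounded function f : E^{k+1} → ℝ, the expectation E[f(Y, X₁,…,X_k)] equals E[f(Y, X₁,…,X_{k−1}, X)], where the expectation is over the joint law of (X, Y, X₁,…,X_k). -/
open MeasureTheory ProbabilityTheory

/-- Nishimori identity. Let `E` be a Polish space, `ν` the law of `Y`, and `κ`
the conditional law of the signal `X` given `Y`. Conditionally on `Y`, the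
replicas `X₁,…,X_k` together with `X` are i.i.d. with law `κ Y` (modelled by the
product measure over `Fin (k+1)`, coordinate `i < k` being `Xᵢ₊₁` and the last
coordinate being `X`). Then for every continuous bounded `f : E^{k+1} → ℝ`,
`E[f(Y, X₁,…,X_k)] = E[f(Y, X₁,…,X_{k−1}, X)]`. -/
theorem nishimori_identity
    {E : Type*} [TopologicalSpace E] [PolishSpace E] [MeasurableSpace E]
    [BorelSpace E]
    (ν : Measure E) [IsProbabilityMeasure ν]
    (κ : Kernel E E) [IsMarkovKernel κ]
    (k : ℕ) (hk : 1 ≤ k)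
    (f : BoundedContinuousFunction (E × (Fin k → E)) ℝ) :
    (∫ y, ∫ x : Fin (k + 1) → E,
        f (y, fun i : Fin k => x i.castSucc) ∂(Measure.pi fun _ => κ y) ∂ν) =
    (∫ y, ∫ x : Fin (k + 1) → E,
        f (y, fun i : Fin k =>
            if (i : ℕ) + 1 = k then x (Fin.last k) else x i.castSucc)
          ∂(Measure.pi fun _ => κ y) ∂ν) := by
  have hkk : (k - 1 : ℕ) < k + 1 := by omega
  set j : Fin (k + 1) := ⟨k - 1, hkk⟩ with hj
  set σ : Fin (k + 1) ≃ Fin (k + 1) := Equiv.swap j (Fin.last k) with hσ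
  refine integral_congr_ae (Filter.Eventually.of_forall fun y => ?_)
  dsimp only
  have hmp := MeasureTheory.measurePreserving_piCongrLeft
    (fun _ : Fin (k + 1) => κ y) σ
  rw [← hmp.integral_comp' (fun z => f (y, fun i : Fin k =>
      if (i : ℕ) + 1 = k then z (Fin.last k) else z i.castSucc))]
  refine integral_congr_ae (Filter.Eventually.of_forall fun x => ?_)
  refine congrArg f (congrArg (Prod.mk y) ?_)
  funext i
  have happ : ∀ m : Fin (k + 1),
      (MeasurableEquiv.piCongrLeft (fun _ => E) σ) x m = x (σ.symm m) := by
    intro m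
    have := MeasurableEquiv.piCongrLeft_apply_apply σ (β := fun _ => E) x (σ.symm m)
    simpa using this
  by_cases h : (i : ℕ) + 1 = k
  · simp only [h, if_pos rfl, happ]
    have h1 : σ.symm (Fin.last k) = j := by simp [hσ]
    rw [h1]
    congr 1
    apply Fin.ext
    simp [hj, Fin.castSucc]
    omega
  · simp only [h, if_neg h, if_false, happ]
    have h2 : σ.symm i.castSucc = i.castSucc := by
      rw [hσ, Equiv.symm_swap]
      refine Equiv.swap_apply_of_ne_of_ne ?_ ?_
      · intro hc
        apply h
        have := congrArg (Fin.val) hc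
        simp [hj, Fin.castSucc] at this
        omega
      · intro hc
        have := congrArg (Fin.val) hc
        simp [Fin.last, Fin.castSucc] at this
        omega
    rw [h2]
end

section
/- Let B ⊆ ℝ, and let g : Bⁿ → ℝ satisfy, for each i, that changing only the i-th coordinate changes g by at most cᵢ ≥ 0 (uniformly over all other coordinates). If U = (U₁,…,Uₙ) is a vector of independent B-valued random variables, then Var(g(U)) ≤ (1/4)·∑ᵢ cᵢ². -/
/-!
Induct on the number of coordinates, splitting off the first one. By the law of total variance
on a product, `Var g(U) = E[Var(g(U) | U₀)] + Var(E[g(U) | U₀])`. Given `U₀ = t ∈ B`, the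
conditional variance is that of the `(n - 1)`-variable function `g(t, ·)`, bounded by induction,
while `t ↦ E g(t, U₁, …)` oscillates by at most `c₀` on `B`, so Popoviciu's inequality bounds its
variance by `c₀² / 4`. Telescoping shows that `g` is bounded on `Bⁿ`, so all moments are finite.
-/

open MeasureTheory ProbabilityTheory

section BoundedDifferences

variable {ι α : Type*} [DecidableEq ι] {B : Set α} {g : (ι → α) → ℝ} {c : ι → ℝ}

def HasBoundedDifferences (B : Set α) (g : (ι → α) → ℝ) (c : ι → ℝ) : Prop :=
  ∀ i u, (∀ j, u j ∈ B) → ∀ u' ∈ B, |g u - g (Function.update u i u')| ≤ c i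

theorem HasBoundedDifferences.abs_sub_le_sum (hg : HasBoundedDifferences B g c) (s : Finset ι)
    {u v : ι → α} (hu : ∀ j, u j ∈ B) (hv : ∀ j, v j ∈ B) (huv : ∀ j ∉ s, u j = v j) :
    |g u - g v| ≤ ∑ i ∈ s, c i := by
  induction s using Finset.induction generalizing u with
  | empty =>
    obtain rfl : u = v := funext fun j => huv j (Finset.notMem_empty j)
    simp
  | insert i s hi ih =>
    set w := Function.update u i (v i)
    have hw : ∀ j, w j ∈ B := fun j => by
      rcases eq_or_ne j i with rfl | h <;> simp [w, *]
    have hwv : ∀ j ∉ s, w j = v j := fun j hj => by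
      rcases eq_or_ne j i with rfl | h
      · simp [w]
      · simp [w, h, huv j (by simp [hj, h])]
    calc |g u - g v| ≤ |g u - g w| + |g w - g v| := abs_sub_le _ _ _
      _ ≤ c i + ∑ j ∈ s, c j := add_le_add (hg i u hu (v i) (hv i)) (ih hw hwv)
      _ = ∑ j ∈ insert i s, c j := (Finset.sum_insert hi).symm

theorem HasBoundedDifferences.ae_abs_le [Fintype ι] [MeasurableSpace α] {μ : ι → Measure α}
    [∀ i, IsProbabilityMeasure (μ i)] (hg : HasBoundedDifferences B g c)
    (hB : ∀ i, ∀ᵐ x ∂μ i, x ∈ B) : ∃ K, ∀ᵐ u ∂Measure.pi μ, |g u| ≤ K := by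
  have hBpi : ∀ᵐ u ∂Measure.pi μ, ∀ i, u i ∈ B := Measure.ae_pi_le_pi (Filter.eventually_pi hB)
  obtain ⟨v, hv⟩ := hBpi.exists
  refine ⟨|g v| + ∑ i, c i, hBpi.mono fun u hu => ?_⟩
  linarith [abs_sub_abs_le_abs_sub (g u) (g v), hg.abs_sub_le_sum Finset.univ hu hv (by simp)]

end BoundedDifferences

section Cons

variable {α : Type*} {B : Set α} {n : ℕ} {g : (Fin (n + 1) → α) → ℝ} {c : Fin (n + 1) → ℝ}

theorem HasBoundedDifferences.comp_cons (hg : HasBoundedDifferences B g c) {t : α} (ht : t ∈ B) :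
    HasBoundedDifferences B (fun y => g (Fin.cons t y)) (fun j => c j.succ) := by
  intro j y hy u' hu'
  show |g _ - g _| ≤ c j.succ
  rw [Fin.cons_update]
  exact hg j.succ _ (Fin.cases ht hy) u' hu'

theorem HasBoundedDifferences.abs_sub_cons_le (hg : HasBoundedDifferences B g c) {t t' : α}
    (ht : t ∈ B) (ht' : t' ∈ B) {y : Fin n → α} (hy : ∀ j, y j ∈ B) :
    |g (Fin.cons t y) - g (Fin.cons t' y)| ≤ c 0 := by
  rw [← Fin.update_cons_zero (α := fun _ => α) t y t']
  exact hg 0 _ (Fin.cases ht hy) t' ht'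

end Cons

section Variance

variable {Ω : Type*} [MeasurableSpace Ω] {μ : Measure Ω} [IsProbabilityMeasure μ]

theorem variance_le_of_abs_sub_le {f : Ω → ℝ} (hf : AEMeasurable f μ) {B : Set Ω}
    (hB : ∀ᵐ ω ∂μ, ω ∈ B) {c : ℝ} (hfB : ∀ x ∈ B, ∀ y ∈ B, |f x - f y| ≤ c) :
    Var[f; μ] ≤ (c / 2) ^ 2 := by
  obtain ⟨x₀, hx₀⟩ := hB.exists
  have hbdd : BddBelow (f '' B) := ⟨f x₀ - c, Set.forall_mem_image.2 fun x hx => by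
    linarith [(abs_le.1 (hfB x₀ hx₀ x hx)).2]⟩
  have hIcc : ∀ x ∈ B, f x ∈ Set.Icc (sInf (f '' B)) (sInf (f '' B) + c) := fun x hx => by
    have : f x - c ≤ sInf (f '' B) := le_csInf ⟨f x₀, Set.mem_image_of_mem f hx₀⟩
      (Set.forall_mem_image.2 fun y hy => by linarith [(abs_le.1 (hfB x hx y hy)).2])
    exact ⟨csInf_le hbdd (Set.mem_image_of_mem f hx), by linarith⟩
  simpa using variance_le_sq_of_bounded (hB.mono hIcc) hf

theorem abs_integral_sub_integral_le {f f' : Ω → ℝ} (hf : Integrable f μ)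
    (hf' : Integrable f' μ) {c : ℝ} (h : ∀ᵐ ω ∂μ, |f ω - f' ω| ≤ c) :
    |∫ ω, f ω ∂μ - ∫ ω, f' ω ∂μ| ≤ c := by
  rw [← integral_sub hf hf']
  simpa using norm_integral_le_of_norm_le_const (μ := μ) (f := fun ω => f ω - f' ω)
    (by simpa only [Real.norm_eq_abs] using h)

end Variance

theorem measurePreserving_finCons {n : ℕ} {α : Type*} [MeasurableSpace α]
    (μ : Fin (n + 1) → Measure α) [∀ i, SigmaFinite (μ i)] :
    MeasurePreserving (fun z : α × (Fin n → α) => (Fin.cons z.1 z.2 : Fin (n + 1) → α))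
      ((μ 0).prod (Measure.pi fun j => μ j.succ)) (Measure.pi μ) := by
  convert (measurePreserving_piFinSuccAbove μ 0).symm using 1
  · ext z
    simp
  · simp

theorem variance_prod_eq_integral_variance_add_variance_integral {α β : Type*}
    [MeasurableSpace α] [MeasurableSpace β] {μ : Measure α} {ν : Measure β}
    [IsProbabilityMeasure μ] [IsProbabilityMeasure ν] {G : α × β → ℝ} (hG : Measurable G)
    {K : ℝ} (hK : ∀ᵐ z ∂μ.prod ν, |G z| ≤ K) :
    Var[G; μ.prod ν] =
      ∫ x, Var[fun y => G (x, y); ν] ∂μ + Var[fun x => ∫ y, G (x, y) ∂ν; μ] := by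
  have hGL2 : MemLp G 2 (μ.prod ν) := MemLp.of_bound hG.aestronglyMeasurable K hK
  have hsliceBound := Measure.ae_ae_of_ae_prod hK
  have hsliceL2 : ∀ᵐ x ∂μ, MemLp (fun y => G (x, y)) 2 ν := hsliceBound.mono fun x hx =>
    MemLp.of_bound (hG.comp measurable_prodMk_left).aestronglyMeasurable K hx
  have hL2 : MemLp (fun x => ∫ y, G (x, y) ∂ν) 2 μ :=
    MemLp.of_bound hG.stronglyMeasurable.integral_prod_right'.aestronglyMeasurable K
      (hsliceBound.mono fun x hx => by
        simpa using norm_integral_le_of_norm_le_const (μ := ν) (f := fun y => G (x, y))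
          (by simpa only [Real.norm_eq_abs] using hx))
  have hvar : ∫ x, Var[fun y => G (x, y); ν] ∂μ =
      ∫ x, ∫ y, G (x, y) ^ 2 ∂ν ∂μ - ∫ x, (∫ y, G (x, y) ∂ν) ^ 2 ∂μ := by
    rw [← integral_sub hGL2.integrable_sq.integral_prod_left hL2.integrable_sq]
    exact integral_congr_ae (hsliceL2.mono fun x hx => variance_eq_sub hx)
  rw [variance_eq_sub hGL2, variance_eq_sub hL2, hvar]
  simp only [Pi.pow_apply]
  rw [integral_prod _ hGL2.integrable_sq, integral_prod _ (hGL2.integrable one_le_two)]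
  ring

theorem variance_le_of_hasBoundedDifferences {α : Type*} [MeasurableSpace α] {B : Set α}
    {n : ℕ} {g : (Fin n → α) → ℝ} {c : Fin n → ℝ} {μ : Fin n → Measure α}
    [∀ i, IsProbabilityMeasure (μ i)] (hg : Measurable g) (hgB : HasBoundedDifferences B g c)
    (hB : ∀ i, ∀ᵐ x ∂μ i, x ∈ B) :
    Var[g; Measure.pi μ] ≤ ∑ i, (c i / 2) ^ 2 := by
  induction n with
  | zero =>
    have hconst : ∀ u : Fin 0 → α, g u ∈ Set.Icc (g default) (g default) := fun u => by
      simp [Subsingleton.elim u default]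
    simpa using variance_le_sq_of_bounded (ae_of_all _ hconst) hg.aemeasurable
  | succ n ih =>
    set ν := Measure.pi fun j : Fin n => μ j.succ
    set G : α × (Fin n → α) → ℝ := fun z => g (Fin.cons z.1 z.2)
    have hcons := measurePreserving_finCons μ
    have hGslice : ∀ t, Measurable fun y => G (t, y) := fun t =>
      (hg.comp hcons.measurable).comp measurable_prodMk_left
    have hsuccB : ∀ j : Fin n, ∀ᵐ x ∂μ j.succ, x ∈ B := fun j => hB j.succ
    have hBpi : ∀ᵐ y ∂ν, ∀ j, y j ∈ B := Measure.ae_pi_le_pi (Filter.eventually_pi hsuccB)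
    have hsliceInt : ∀ t ∈ B, Integrable (fun y => G (t, y)) ν := fun t ht => by
      obtain ⟨K, hK⟩ := (hgB.comp_cons ht).ae_abs_le hsuccB
      exact Integrable.of_bound (hGslice t).aestronglyMeasurable K hK
    have hsliceVar : ∀ t ∈ B, Var[fun y => G (t, y); ν] ≤ ∑ j : Fin n, (c j.succ / 2) ^ 2 :=
      fun t ht => ih (hGslice t) (hgB.comp_cons ht) hsuccB
    have hmeanVar : Var[fun t => ∫ y, G (t, y) ∂ν; μ 0] ≤ (c 0 / 2) ^ 2 :=
      variance_le_of_abs_sub_le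
        (hg.comp hcons.measurable).stronglyMeasurable.integral_prod_right'.aemeasurable (hB 0)
        fun t ht t' ht' => abs_integral_sub_integral_le (hsliceInt t ht) (hsliceInt t' ht')
          (hBpi.mono fun _ hy => hgB.abs_sub_cons_le ht ht' hy)
    obtain ⟨K, hK⟩ := hgB.ae_abs_le hB
    calc Var[g; Measure.pi μ] = Var[G; (μ 0).prod ν] :=
          (hcons.variance_fun_comp hg.aemeasurable).symm
      _ = ∫ t, Var[fun y => G (t, y); ν] ∂μ 0 + Var[fun t => ∫ y, G (t, y) ∂ν; μ 0] :=
          variance_prod_eq_integral_variance_add_variance_integral (hg.comp hcons.measurable)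
            (hcons.quasiMeasurePreserving.ae hK)
      _ ≤ ∑ j : Fin n, (c j.succ / 2) ^ 2 + (c 0 / 2) ^ 2 := by
          refine add_le_add ?_ hmeanVar
          refine (integral_mono_of_nonneg (ae_of_all _ fun t => variance_nonneg _ _)
            (integrable_const _) ((hB 0).mono hsliceVar)).trans ?_
          simp
      _ = ∑ i, (c i / 2) ^ 2 := by rw [Fin.sum_univ_succ, add_comm]

theorem bounded_differences_variance_general
    (n : ℕ) (B : Set ℝ) (g : (Fin n → ℝ) → ℝ) (c : Fin n → ℝ)
    (hg : Measurable g)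
    (hdiff : ∀ i : Fin n, ∀ u : Fin n → ℝ, (∀ j, u j ∈ B) → ∀ u' ∈ B,
        |g u - g (Function.update u i u')| ≤ c i)
    (μ : Fin n → Measure ℝ) [∀ i, IsProbabilityMeasure (μ i)]
    (hB : ∀ i, μ i Bᶜ = 0) :
    (∫ u, (g u) ^ 2 ∂(Measure.pi μ)) - (∫ u, g u ∂(Measure.pi μ)) ^ 2 ≤
      (1 / 4) * ∑ i, (c i) ^ 2 := by
  have hBae : ∀ i, ∀ᵐ x ∂μ i, x ∈ B := fun i => mem_ae_iff.2 (hB i)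
  obtain ⟨K, hK⟩ := HasBoundedDifferences.ae_abs_le hdiff hBae
  have hL2 : MemLp g 2 (Measure.pi μ) := MemLp.of_bound hg.aestronglyMeasurable K hK
  calc _ = Var[g; Measure.pi μ] := by simp [variance_eq_sub hL2]
    _ ≤ ∑ i, (c i / 2) ^ 2 := variance_le_of_hasBoundedDifferences hg hdiff hBae
    _ = (1 / 4) * ∑ i, c i ^ 2 := by rw [Finset.mul_sum]; ring_nf

/-- Bounded differences (McDiarmid-type) variance inequality, real case: if
changing the `i`-th coordinate of `g` changes its value by at most `cᵢ`
(uniformly over `Bⁿ`), and `U` has independent `B`-valued coordinates with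
laws `μ i`, then `Var(g(U)) ≤ (1/4) ∑ᵢ cᵢ²`. -/
theorem bounded_differences_variance
    (n : ℕ) (B : Set ℝ) (g : (Fin n → ℝ) → ℝ) (c : Fin n → ℝ)
    (hg : Measurable g)
    (hc : ∀ i, 0 ≤ c i)
    (hdiff : ∀ i : Fin n, ∀ u : Fin n → ℝ, (∀ j, u j ∈ B) → ∀ u' ∈ B,
        |g u - g (Function.update u i u')| ≤ c i)
    (μ : Fin n → Measure ℝ) [∀ i, IsProbabilityMeasure (μ i)]
    (hB : ∀ i, μ i Bᶜ = 0) :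
    (∫ u, (g u) ^ 2 ∂(Measure.pi μ)) - (∫ u, g u ∂(Measure.pi μ)) ^ 2 ≤
      (1 / 4) * ∑ i, (c i) ^ 2 :=
  bounded_differences_variance_general n B g c hg hdiff μ hB
end

section
/- Let ρ > 0, let ν be a compactly supported probability measure on [0,∞), and suppose γ_x, γ_z, q_x, q̂_x ∈ ℝ satisfy: (i) γ_z ≥ 0; (ii) q̂_x = q_x/(ρ(ρ−q_x)) − γ_x with 0 ≤ q_x < ρ; and (iii) q_x ≥ ρ²q̂_x/(1+ρq̂_x) with 1+ρq̂_x > 0. Then γ_x ≥ 0, and consequently 1/ρ + γ_x + γ_z·λ_min ≥ 1/ρ > 0 for any λ_min ≥ 0. -/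
open MeasureTheory Set

/-! The Gaussian-estimator bound (iii) is equivalent to `ρ(ρ - q_x) q̂_x ≤ q_x`, while the
fixed-point relation (ii) says `ρ(ρ - q_x) q̂_x = q_x - γ_x ρ(ρ - q_x)`. Together they give
`γ_x ρ(ρ - q_x) ≥ 0`, and `ρ(ρ - q_x) > 0` because the overlap has not saturated. -/

lemma sq_mul_div_one_add_mul_le_iff {ρ q qhat : ℝ} (hden : 0 < 1 + ρ * qhat) :
    ρ ^ 2 * qhat / (1 + ρ * qhat) ≤ q ↔ ρ * (ρ - q) * qhat ≤ q := by
  rw [div_le_iff₀ hden]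
  constructor <;> intro h <;> linarith

lemma nonneg_of_mul_div_sub_le {a q γ : ℝ} (ha : 0 < a) (h : a * (q / a - γ) ≤ q) :
    0 ≤ γ := by
  rw [mul_sub, mul_div_cancel₀ q ha.ne'] at h
  exact nonneg_of_mul_nonneg_right (by linarith) ha

theorem no_saturation_general
    (ρ : ℝ) (hρ : 0 < ρ)
    (γx γz qx qhatx : ℝ)
    (hγz : 0 ≤ γz)
    (hqxρ : qx < ρ)
    (hfix : qhatx = qx / (ρ * (ρ - qx)) - γx)
    (hden : 0 < 1 + ρ * qhatx)
    (hbound : ρ ^ 2 * qhatx / (1 + ρ * qhatx) ≤ qx) :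
    0 ≤ γx ∧ ∀ lmin : ℝ, 0 ≤ lmin →
      1 / ρ ≤ 1 / ρ + γx + γz * lmin ∧ 0 < (1 / ρ : ℝ) := by
  have hgap : 0 < ρ * (ρ - qx) := mul_pos hρ (sub_pos.mpr hqxρ)
  have hγx : 0 ≤ γx := by
    refine nonneg_of_mul_div_sub_le (q := qx) hgap ?_
    rw [← hfix]
    exact (sq_mul_div_one_add_mul_le_iff hden).mp hbound
  refine ⟨hγx, fun lmin hlmin => ⟨?_, by positivity⟩⟩
  have := mul_nonneg hγz hlmin
  linarith

/-- No-saturation argument: if `γ_z ≥ 0`, `q̂_x = q_x/(ρ(ρ−q_x)) − γ_x` with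
`0 ≤ q_x < ρ`, and `q_x ≥ ρ²q̂_x/(1+ρq̂_x)` with `1+ρq̂_x > 0`, then `γ_x ≥ 0`,
and consequently `1/ρ + γ_x + γ_z λ_min ≥ 1/ρ > 0` for any `λ_min ≥ 0`. -/
theorem no_saturation
    (ρ : ℝ) (hρ : 0 < ρ)
    (ν : Measure ℝ) [IsProbabilityMeasure ν]
    (hsupp : ∃ C : ℝ, ν (Icc (0:ℝ) C)ᶜ = 0)
    (γx γz qx qhatx : ℝ)
    (hγz : 0 ≤ γz)
    (hqx0 : 0 ≤ qx) (hqxρ : qx < ρ)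
    (hfix : qhatx = qx / (ρ * (ρ - qx)) - γx)
    (hden : 0 < 1 + ρ * qhatx)
    (hbound : ρ ^ 2 * qhatx / (1 + ρ * qhatx) ≤ qx) :
    0 ≤ γx ∧ ∀ lmin : ℝ, 0 ≤ lmin →
      1 / ρ ≤ 1 / ρ + γx + γz * lmin ∧ 0 < (1 / ρ : ℝ) :=
  no_saturation_general ρ hρ γx γz qx qhatx hγz hqxρ hfix hden hbound
end
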